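/- arXiv:2109.10300 — 8 statements merged into one kernel-verified Lean document; each statement's English description precedes it below -/
import Mathlib

section
/- Let n ≥ 2, let G = (Z/nZ) × (Z/nZ), let (e1, e2) be a basis of G, and let x1, ..., xn ∈ [0, n-1] with x1 + ... + xn ≡ 1 (mod n). Then the sequence S = e1^{[n-1]} · (x1 e1 + e2) · (x2 e1 + e2) · ... · (xn e1 + e2), consisting of e1 repeated n-1 times together with the n terms x_i e1 + e2, is a minimal zero-sum sequence of length 2n-1. -/
/-- `(e1, e2)` is a basis for `(ZMod n)²`: the map `(a,b) ↦ a•e1 + b•e2` is bijective. -/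
def IsBasis {N : ℕ} (e1 e2 : ZMod N × ZMod N) : Prop :=
  Function.Bijective (fun p : ZMod N × ZMod N => p.1 • e1 + p.2 • e2)

/-- A minimal zero-sum sequence. -/
def IsMinZeroSum {G : Type*} [AddCommGroup G] (S : Multiset G) : Prop :=
  S ≠ 0 ∧ S.sum = 0 ∧ ∀ T ≤ S, T ≠ 0 → T ≠ S → T.sum ≠ 0

theorem sum_form {n : ℕ} (e1 e2 : ZMod n × ZMod n) :
    ∀ T : Multiset (ZMod n × ZMod n), (∀ g ∈ T, ∃ c : ZMod n, g = c • e1 + e2) →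
      ∃ y : ZMod n, T.sum = y • e1 + (Multiset.card T : ZMod n) • e2 := by
  intro T
  induction T using Multiset.induction_on with
  | empty => intro _; exact ⟨0, by simp⟩
  | cons a s ih =>
    intro h
    obtain ⟨y, hy⟩ := ih (fun g hg => h g (Multiset.mem_cons_of_mem hg))
    obtain ⟨c, hc⟩ := h a (Multiset.mem_cons_self a s)
    refine ⟨y + c, ?_⟩
    simp [hy, hc, add_smul]
    abel

theorem stmt2 {n : ℕ} (hn : 2 ≤ n) (e1 e2 : ZMod n × ZMod n)
    (hB : IsBasis e1 e2) (x : Fin n → ZMod n) (hx : (∑ i, x i) = 1) :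
    IsMinZeroSum
      (Multiset.replicate (n - 1) e1 +
        (Finset.univ : Finset (Fin n)).val.map (fun i => x i • e1 + e2)) ∧
    Multiset.card
      (Multiset.replicate (n - 1) e1 +
        (Finset.univ : Finset (Fin n)).val.map (fun i => x i • e1 + e2)) = 2 * n - 1 := by
  have hn0 : (n : ℕ) ≠ 0 := by omega
  haveI : NeZero n := ⟨hn0⟩
  haveI : Fact (1 < n) := ⟨hn⟩
  have hz : ∀ a b : ZMod n, a • e1 + b • e2 = 0 → a = 0 ∧ b = 0 := by
    intro a b hab
    have h : (fun p : ZMod n × ZMod n => p.1 • e1 + p.2 • e2) (a, b)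
        = (fun p : ZMod n × ZMod n => p.1 • e1 + p.2 • e2) (0, 0) := by
      simpa using hab
    have h2 := hB.injective h
    exact ⟨congrArg Prod.fst h2, congrArg Prod.snd h2⟩
  set A : Multiset (ZMod n × ZMod n) := Multiset.replicate (n - 1) e1 with hA
  set B : Multiset (ZMod n × ZMod n) :=
    (Finset.univ : Finset (Fin n)).val.map (fun i => x i • e1 + e2) with hBdef
  have hcardB : Multiset.card B = n := by simp [hBdef]
  have hsumB : B.sum = e1 + (n : ZMod n) • e2 := by
    have h : B.sum = ∑ i : Fin n, (x i • e1 + e2) := rfl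
    rw [h, Finset.sum_add_distrib, ← Finset.sum_smul, hx, one_smul,
      Finset.sum_const, Finset.card_univ, Fintype.card_fin]
    congr 1
    exact (Nat.cast_smul_eq_nsmul (ZMod n) n e2).symm
  have hne1 : ∀ i : Fin n, x i • e1 + e2 ≠ e1 := by
    intro i h
    have h1 : (fun p : ZMod n × ZMod n => p.1 • e1 + p.2 • e2) (x i, 1)
        = (fun p : ZMod n × ZMod n => p.1 • e1 + p.2 • e2) (1, 0) := by
      simpa using h
    have h2 := hB.injective h1
    exact one_ne_zero (congrArg Prod.snd h2)
  have hcard : Multiset.card (A + B) = 2 * n - 1 := by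
    rw [Multiset.card_add, hcardB, hA, Multiset.card_replicate]
    omega
  have hsumA : A.sum = ((n - 1 : ℕ) : ZMod n) • e1 := by
    rw [hA, Multiset.sum_replicate]
    exact (Nat.cast_smul_eq_nsmul (ZMod n) (n - 1) e1).symm
  have hcast : ((n - 1 : ℕ) : ZMod n) = -1 := by
    have h : ((n - 1 : ℕ) : ZMod n) = (n : ZMod n) - 1 := by
      push_cast [Nat.cast_sub (by omega : 1 ≤ n)]; ring
    simp [h]
  have hsum : (A + B).sum = 0 := by
    rw [Multiset.sum_add, hsumA, hsumB, hcast]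
    simp
  refine ⟨⟨?_, hsum, ?_⟩, hcard⟩
  · intro h
    have h2 := congrArg Multiset.card h
    rw [Multiset.card_add, hcardB] at h2
    simp at h2
    omega
  · intro T hT hT0 hTS hTsum
    have hdecomp : T.filter (· = e1) + T.filter (fun g => ¬ g = e1) = T :=
      Multiset.filter_add_not _ T
    set T1 := T.filter (· = e1) with hT1
    set T2 := T.filter (fun g => ¬ g = e1) with hT2
    have hT1rep : T1 = Multiset.replicate (Multiset.card T1) e1 := by
      rw [Multiset.eq_replicate]
      exact ⟨rfl, fun b hb => by
        have := Multiset.mem_filter.mp (hT1 ▸ hb)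
        exact this.2⟩
    set a := Multiset.card T1
    have hT2B : T2 ≤ B := by
      have h1 : T2 ≤ (A + B).filter (fun g => ¬ g = e1) :=
        Multiset.filter_le_filter _ hT
      have h2 : (A + B).filter (fun g => ¬ g = e1) = B := by
        rw [Multiset.filter_add]
        have hA0 : A.filter (fun g => ¬ g = e1) = 0 := by
          rw [Multiset.filter_eq_nil]
          intro g hg
          rw [hA] at hg
          simp [Multiset.eq_of_mem_replicate hg]
        have hBf : B.filter (fun g => ¬ g = e1) = B := by
          rw [Multiset.filter_eq_self]
          intro g hg
          rw [hBdef, Multiset.mem_map] at hg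
          obtain ⟨i, _, hi⟩ := hg
          rw [← hi]
          exact hne1 i
        rw [hA0, hBf, zero_add]
      rwa [h2] at h1
    have haA : a ≤ n - 1 := by
      have h1 : Multiset.count e1 T1 = a := by
        rw [hT1rep, Multiset.count_replicate_self]
      have hle : Multiset.count e1 T1 ≤ Multiset.count e1 (A + B) :=
        Multiset.count_le_of_le _ (le_trans (Multiset.filter_le _ T) hT)
      have hcntB : Multiset.count e1 B = 0 := by
        rw [Multiset.count_eq_zero]
        intro hmem
        rw [hBdef, Multiset.mem_map] at hmem
        obtain ⟨i, _, hi⟩ := hmem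
        exact hne1 i hi
      have hcntA : Multiset.count e1 A = n - 1 := by
        rw [hA, Multiset.count_replicate_self]
      rw [Multiset.count_add, hcntA, hcntB, add_zero] at hle
      omega
    obtain ⟨y, hy⟩ := sum_form e1 e2 T2 (by
      intro g hg
      have hm := Multiset.mem_of_le hT2B hg
      rw [hBdef, Multiset.mem_map] at hm
      obtain ⟨i, _, hi⟩ := hm
      exact ⟨x i, hi.symm⟩)
    set k := Multiset.card T2 with hk
    have hkn : k ≤ n := by
      have := Multiset.card_le_card hT2B
      omega
    have hTsum2 : a • e1 + (y • e1 + (k : ZMod n) • e2) = 0 := by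
      rw [← hdecomp, Multiset.sum_add, hT1rep, Multiset.sum_replicate, hy] at hTsum
      exact hTsum
    have hTsum' : ((a : ZMod n) + y) • e1 + (k : ZMod n) • e2 = 0 := by
      calc ((a : ZMod n) + y) • e1 + (k : ZMod n) • e2
          = a • e1 + (y • e1 + (k : ZMod n) • e2) := by
            rw [add_smul, Nat.cast_smul_eq_nsmul]; abel
        _ = 0 := hTsum2
    obtain ⟨hc1, hc2⟩ := hz _ _ hTsum'
    have hkdvd : n ∣ k := (ZMod.natCast_eq_zero_iff k n).mp hc2
    rcases Nat.eq_zero_or_pos k with hk0 | hkpos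
    · have hT20 : T2 = 0 := Multiset.card_eq_zero.mp hk0
      have hy0 : y = 0 := by
        have hs0 : T2.sum = 0 := by rw [hT20]; simp
        rw [hs0] at hy
        exact (hz y (k : ZMod n) hy.symm).1
      rw [hy0, add_zero] at hc1
      have hadvd : n ∣ a := (ZMod.natCast_eq_zero_iff a n).mp hc1
      have ha0 : a = 0 := Nat.eq_zero_of_dvd_of_lt hadvd (by omega)
      apply hT0
      rw [← hdecomp, hT20, hT1rep, ha0]
      simp
    · have hkeq : k = n := by
        have := Nat.le_of_dvd hkpos hkdvd
        omega
      have hT2eq : T2 = B := Multiset.eq_of_le_of_card_le hT2B (by omega)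
      have hy1 : (y - 1) = 0 ∧ ((k : ZMod n) - (n : ZMod n)) = 0 := by
        have h1 : y • e1 + (k : ZMod n) • e2 = e1 + (n : ZMod n) • e2 := by
          rw [← hy, hT2eq, hsumB]
        apply hz
        rw [sub_smul, sub_smul, one_smul]
        rw [← sub_eq_zero] at h1
        rw [← h1]
        abel
      have hy1' : y = 1 := by linear_combination hy1.1
      rw [hy1'] at hc1
      have hceq : (a : ZMod n) = ((n - 1 : ℕ) : ZMod n) := by
        rw [hcast]; linear_combination hc1
      have haeq : a = n - 1 := by
        have h := (ZMod.natCast_eq_natCast_iff' a (n - 1) n).mp hceq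
        rwa [Nat.mod_eq_of_lt (by omega), Nat.mod_eq_of_lt (by omega)] at h
      apply hTS
      rw [← hdecomp, hT1rep, haeq, hT2eq]
end

section
/- Let n ≥ 4 be an integer, let G = (Z/nZ) × (Z/nZ) with basis (e1, e2), and let k ∈ [2, n-2]. Then the sequence S = e1^{[n-1]} · e2^{[n-1]} · (e1+e2)^{[k]} of length 2n-2+k contains no nonempty zero-sum subsequence of length at most 2n-1-k. -/
theorem stmt3 {n : ℕ} (hn : 4 ≤ n) (e1 e2 : ZMod n × ZMod n)
    (hB : IsBasis e1 e2) (k : ℕ) (hk2 : 2 ≤ k) (hkn : k ≤ n - 2) :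
    ∀ T ≤ Multiset.replicate (n - 1) e1 + Multiset.replicate (n - 1) e2 +
            Multiset.replicate k (e1 + e2),
      T ≠ 0 → Multiset.card T ≤ 2 * n - 1 - k → T.sum ≠ 0 := by
  intro T hT hT0 hcard hsum
  haveI : NeZero n := ⟨by omega⟩
  have hinj : ∀ p q : ZMod n × ZMod n,
      p.1 • e1 + p.2 • e2 = q.1 • e1 + q.2 • e2 → p = q := fun p q h => hB.injective h
  have hone : (1 : ZMod n) ≠ 0 := by
    intro h
    have h1 : ((1 : ℕ) : ZMod n) = 0 := by simpa using h
    have h2 := (ZMod.natCast_eq_zero_iff 1 n).mp h1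
    have := Nat.le_of_dvd one_pos h2
    omega
  have h12 : e1 ≠ e2 := by
    intro h
    have := hinj (1, 0) (0, 1) (by simp [h])
    simp [Prod.ext_iff] at this
    exact hone this.1
  have h13 : e1 ≠ e1 + e2 := by
    intro h
    have h2 : e2 = 0 := by
      have := congrArg (fun x => x - e1) h
      simpa [add_sub_cancel_left] using this.symm
    have := hinj (0, 1) (0, 0) (by simp [h2])
    simp [Prod.ext_iff] at this
    exact hone this
  have h23 : e2 ≠ e1 + e2 := by
    intro h
    have h1 : e1 = 0 := by
      have := congrArg (fun x => x - e2) h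
      simpa using this.symm
    have := hinj (1, 0) (0, 0) (by simp [h1])
    simp [Prod.ext_iff] at this
    exact hone this
  set a := T.count e1 with ha
  set b := T.count e2 with hb
  set c := T.count (e1 + e2) with hc
  have hcountR : ∀ g, T.count g ≤ (Multiset.replicate (n - 1) e1 + Multiset.replicate (n - 1) e2 +
      Multiset.replicate k (e1 + e2)).count g := fun g => Multiset.count_le_of_le g hT
  have hcount : ∀ g, (Multiset.replicate (n - 1) e1 + Multiset.replicate (n - 1) e2 +
      Multiset.replicate k (e1 + e2)).count g =
      (if e1 = g then n - 1 else 0) + (if e2 = g then n - 1 else 0) +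
      (if e1 + e2 = g then k else 0) := by
    intro g
    rw [Multiset.count_add, Multiset.count_add, Multiset.count_replicate,
      Multiset.count_replicate, Multiset.count_replicate]
  have hA : a ≤ n - 1 := by
    have h := hcountR e1
    rw [hcount, if_pos rfl, if_neg (Ne.symm h12), if_neg (Ne.symm h13)] at h
    omega
  have hBb : b ≤ n - 1 := by
    have h := hcountR e2
    rw [hcount, if_neg h12, if_pos rfl, if_neg (Ne.symm h23)] at h
    omega
  have hC : c ≤ k := by
    have h := hcountR (e1 + e2)
    rw [hcount, if_neg h13, if_neg h23, if_pos rfl] at h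
    omega
  have hTeq : T = Multiset.replicate a e1 + Multiset.replicate b e2 +
      Multiset.replicate c (e1 + e2) := by
    ext g
    rw [Multiset.count_add, Multiset.count_add, Multiset.count_replicate,
      Multiset.count_replicate, Multiset.count_replicate]
    by_cases g1 : e1 = g
    · rw [if_pos g1, if_neg (g1 ▸ Ne.symm h12), if_neg (g1 ▸ Ne.symm h13)]
      rw [← g1]; omega
    · by_cases g2 : e2 = g
      · rw [if_neg g1, if_pos g2, if_neg (g2 ▸ Ne.symm h23)]
        rw [← g2]; omega
      · by_cases g3 : e1 + e2 = g
        · rw [if_neg g1, if_neg g2, if_pos g3, ← g3]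
          omega
        · rw [if_neg g1, if_neg g2, if_neg g3]
          have h := hcountR g
          rw [hcount, if_neg g1, if_neg g2, if_neg g3] at h
          omega
  have hcard' : a + b + c = Multiset.card T := by
    rw [hTeq]; simp
  have hpos : 1 ≤ a + b + c := by
    obtain ⟨x, hx⟩ := Multiset.exists_mem_of_ne_zero hT0
    have hxR := Multiset.mem_of_le hT hx
    simp only [Multiset.mem_add, Multiset.mem_replicate] at hxR
    have hx1 := Multiset.one_le_count_iff_mem.mpr hx
    rcases hxR with (⟨-, h⟩ | ⟨-, h⟩) | ⟨-, h⟩ <;> subst h <;> omega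
  have hsum' : (a + c) • e1 + (b + c) • e2 = 0 := by
    have h : T.sum = a • e1 + b • e2 + c • (e1 + e2) := by
      rw [hTeq]; simp [Multiset.sum_replicate]
    rw [h] at hsum
    rw [smul_add] at hsum
    rw [add_nsmul, add_nsmul, ← hsum]
    abel
  have key := hinj (((a + c : ℕ) : ZMod n), ((b + c : ℕ) : ZMod n)) (0, 0) (by
    show ((a + c : ℕ) : ZMod n) • e1 + ((b + c : ℕ) : ZMod n) • e2 = (0 : ZMod n) • e1 + (0 : ZMod n) • e2
    rw [Nat.cast_smul_eq_nsmul, Nat.cast_smul_eq_nsmul, hsum']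
    simp)
  have k1 : ((a + c : ℕ) : ZMod n) = 0 := congrArg Prod.fst key
  have k2 : ((b + c : ℕ) : ZMod n) = 0 := congrArg Prod.snd key
  obtain ⟨q, hq⟩ := (ZMod.natCast_eq_zero_iff _ n).mp k1
  obtain ⟨r, hr⟩ := (ZMod.natCast_eq_zero_iff _ n).mp k2
  have hq2 : q < 2 := by
    by_contra h
    push_neg at h
    have : n * 2 ≤ n * q := Nat.mul_le_mul_left n h
    omega
  have hr2 : r < 2 := by
    by_contra h
    push_neg at h
    have : n * 2 ≤ n * r := Nat.mul_le_mul_left n h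
    omega
  interval_cases q <;> interval_cases r <;> omega
end

section
/- Let e1 generate a cyclic group of order n ≥ 4, and let k ∈ [2, n-2]. If A = {e1, 2e1, ..., k e1} (an arithmetic progression of length k with difference e1 in the cyclic group ⟨e1⟩ of order n) equals c + {0, d, 2d, ..., (k-1)d} for some c ∈ ⟨e1⟩ and d ∈ ⟨e1⟩ with ⟨d⟩ = ⟨e1⟩ (an arithmetic progression of length k with difference d), then d = e1 or d = -e1. -/
open Finset

lemma core (n k : ℕ) (hn : 4 ≤ n) (hk2 : 2 ≤ k) (hkn : k ≤ n - 2)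
    (c u : ZMod n) (hu : IsUnit u)
    (h : (range k).image (fun i => ((i + 1 : ℕ) : ZMod n)) =
         (range k).image (fun i => c + i • u)) :
    u = 1 ∨ u = -1 := by
  haveI : NeZero n := ⟨by omega⟩
  set A := (range k).image (fun i => ((i + 1 : ℕ) : ZMod n)) with hA
  have hkn' : k < n := by omega
  have memA : ∀ a : ZMod n, a ∈ A ↔ 1 ≤ a.val ∧ a.val ≤ k := by
    intro a
    constructor
    · rintro ha
      simp only [hA, mem_image, mem_range] at ha
      obtain ⟨i, hi, rfl⟩ := ha
      rw [ZMod.val_natCast_of_lt (by omega)]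
      omega
    · rintro ⟨h1, h2⟩
      simp only [hA, mem_image, mem_range]
      refine ⟨a.val - 1, by omega, ?_⟩
      rw [show a.val - 1 + 1 = a.val by omega, ZMod.natCast_val, ZMod.cast_id]
  -- uniqueness of the "last" element
  have hun : ∀ a : ZMod n, a ∈ A → a + u ∉ A → a = c + (k - 1) • u := by
    intro a ha hna
    rw [h, mem_image] at ha
    obtain ⟨i, hi, rfl⟩ := ha
    rw [mem_range] at hi
    rcases Nat.lt_or_ge i (k - 1) with hlt | hge
    · exfalso
      apply hna
      rw [h, mem_image]
      exact ⟨i + 1, by rw [mem_range]; omega, by rw [add_assoc, ← succ_nsmul]⟩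
    · have : i = k - 1 := by omega
      rw [this]
  -- now suppose u ≠ 1 and u ≠ -1, produce two distinct bad elements
  by_contra hcon
  push_neg at hcon
  obtain ⟨h1, h2⟩ := hcon
  set m := u.val with hm
  have hmn : m < n := ZMod.val_lt u
  haveI : Fact (1 < n) := ⟨by omega⟩
  have hu0 : u ≠ 0 := by
    intro h0
    rw [h0] at hu
    exact one_ne_zero ((isUnit_zero_iff.mp hu).symm)
  have hm1 : 1 ≤ m := by
    rcases Nat.eq_zero_or_pos m with h0 | h0
    · exfalso; apply hu0
      have this : ((u.val : ℕ) : ZMod n) = u := ZMod.natCast_rightInverse u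
      rw [← this, ← hm, h0, Nat.cast_zero]
    · exact h0
  have hmne1 : m ≠ 1 := by
    intro hme
    apply h1
    have this : ((u.val : ℕ) : ZMod n) = u := ZMod.natCast_rightInverse u
    rw [← this, ← hm, hme, Nat.cast_one]
  have hmnen1 : m ≠ n - 1 := by
    intro hme
    apply h2
    have this : ((u.val : ℕ) : ZMod n) = u := ZMod.natCast_rightInverse u
    rw [← this, ← hm, hme]
    have : ((n - 1 : ℕ) : ZMod n) = (n : ZMod n) - 1 := by
      rw [Nat.cast_sub (by omega), Nat.cast_one]
    rw [this, ZMod.natCast_self, zero_sub]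
  -- bad element maker
  have bad : ∀ j : ℕ, 1 ≤ j → j ≤ k → ((j + m) % n = 0 ∨ k + 1 ≤ (j + m) % n) →
      ((j : ZMod n) = c + (k - 1) • u) := by
    intro j hj1 hjk hb
    apply hun
    · rw [memA, ZMod.val_natCast_of_lt (by omega)]; omega
    · rw [memA]
      intro ⟨hb1, hb2⟩
      rw [ZMod.val_add, ZMod.val_natCast_of_lt (by omega), ← hm] at hb1 hb2
      omega
  have key : ∀ j1 j2 : ℕ, 1 ≤ j1 → j1 ≤ k → 1 ≤ j2 → j2 ≤ k → j1 ≠ j2 →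
      ((j1 + m) % n = 0 ∨ k + 1 ≤ (j1 + m) % n) →
      ((j2 + m) % n = 0 ∨ k + 1 ≤ (j2 + m) % n) → False := by
    intro j1 j2 ha1 ha2 hb1 hb2 hne hx1 hx2
    have e1 := bad j1 ha1 ha2 hx1
    have e2 := bad j2 hb1 hb2 hx2
    have : (j1 : ZMod n) = (j2 : ZMod n) := e1.trans e2.symm
    apply hne
    have v1 := ZMod.val_natCast_of_lt (show j1 < n by omega)
    have v2 := ZMod.val_natCast_of_lt (show j2 < n by omega)
    rw [← v1, ← v2, this]
  rcases le_or_gt m (n - k) with hcase | hcase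
  · -- j1 = k, j2 = k - 1
    refine key k (k - 1) (by omega) le_rfl (by omega) (by omega) (by omega) ?_ ?_
    · rcases Nat.lt_or_ge (k + m) n with hlt | hge
      · right; rw [Nat.mod_eq_of_lt hlt]; omega
      · left; have : k + m = n := by omega
        rw [this, Nat.mod_self]
    · right
      rw [Nat.mod_eq_of_lt (by omega)]
      omega
  · -- j1 = n - m, j2 = n - m - 1
    refine key (n - m) (n - m - 1) (by omega) (by omega) (by omega) (by omega) (by omega) ?_ ?_
    · left; rw [show n - m + m = n by omega, Nat.mod_self]
    · right
      rw [show n - m - 1 + m = n - 1 by omega, Nat.mod_eq_of_lt (by omega)]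
      omega

theorem stmt4 {G : Type*} [AddCommGroup G] [DecidableEq G]
    (n k : ℕ) (hn : 4 ≤ n) (e1 : G) (hord : addOrderOf e1 = n)
    (hk2 : 2 ≤ k) (hkn : k ≤ n - 2)
    (c d : G) (hc : c ∈ AddSubgroup.zmultiples e1)
    (hd : AddSubgroup.zmultiples d = AddSubgroup.zmultiples e1)
    (hAP : (Finset.range k).image (fun i => (i + 1) • e1) =
           (Finset.range k).image (fun i => c + i • d)) :
    d = e1 ∨ d = -e1 := by
  have hn0 : (n : ℤ) • e1 = 0 := by
    rw [natCast_zsmul, ← hord, addOrderOf_nsmul_eq_zero]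
  set f : ZMod n →+ G := ZMod.lift n ⟨zmultiplesHom G e1, hn0⟩ with hf
  have hfz : ∀ z : ℤ, f (z : ZMod n) = z • e1 := fun z => ZMod.lift_coe n _ z
  have hfinj : Function.Injective f := by
    rw [hf, ZMod.lift_injective]
    intro z hz
    simp only [zmultiplesHom_apply] at hz
    rw [ZMod.intCast_zmod_eq_zero_iff_dvd]
    rwa [← addOrderOf_dvd_iff_zsmul_eq_zero, hord] at hz
  -- express c and d through f
  obtain ⟨zc, hzc⟩ := AddSubgroup.mem_zmultiples_iff.mp hc
  have hdmem : d ∈ AddSubgroup.zmultiples e1 := hd ▸ AddSubgroup.mem_zmultiples d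
  obtain ⟨zd, hzd⟩ := AddSubgroup.mem_zmultiples_iff.mp hdmem
  set u : ZMod n := (zd : ZMod n) with hu
  set c' : ZMod n := (zc : ZMod n) with hc'
  have hfd : f u = d := by rw [hu, hfz]; exact hzd
  have hfc : f c' = c := by rw [hc', hfz]; exact hzc
  -- u is a unit
  have he1mem : e1 ∈ AddSubgroup.zmultiples d := hd ▸ AddSubgroup.mem_zmultiples e1
  obtain ⟨w, hw⟩ := AddSubgroup.mem_zmultiples_iff.mp he1mem
  have huunit : IsUnit u := by
    have e1eq : f ((w * zd : ℤ) : ZMod n) = e1 := by rw [hfz, mul_zsmul, hzd, hw]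
    have oneeq : f ((1 : ℤ) : ZMod n) = e1 := by rw [hfz, one_zsmul]
    have heq : ((w * zd : ℤ) : ZMod n) = ((1 : ℤ) : ZMod n) := hfinj (e1eq.trans oneeq.symm)
    rw [Int.cast_mul, Int.cast_one] at heq
    exact IsUnit.of_mul_eq_one _ (mul_comm (w : ZMod n) u ▸ heq)
  -- transfer hAP
  have hAP' : (Finset.range k).image (fun i => ((i + 1 : ℕ) : ZMod n)) =
      (Finset.range k).image (fun i => c' + i • u) := by
    apply Finset.image_injective hfinj
    rw [Finset.image_image, Finset.image_image]
    convert hAP using 2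
    · funext i
      show f (((i + 1 : ℕ) : ZMod n)) = (i + 1) • e1
      rw [← Int.cast_natCast, hfz, natCast_zsmul]
    · funext i
      show f (c' + i • u) = c + i • d
      rw [map_add, map_nsmul, hfd, hfc]
  rcases core n k hn hk2 hkn c' u huunit hAP' with h1 | h1
  · left
    rw [← hfd, h1, show (1 : ZMod n) = ((1 : ℤ) : ZMod n) by push_cast; ring, hfz, one_zsmul]
  · right
    rw [← hfd, h1, show (-1 : ZMod n) = ((-1 : ℤ) : ZMod n) by push_cast; ring, hfz,
      neg_zsmul, one_zsmul]
end

section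
/- Let n ≥ 3, let G = (Z/nZ) × (Z/nZ) with basis (e1, e2), let k ∈ [2, n-2], and let S = e1^{[n-1]} · e2^{[n-1]} · (e1+e2)^{[k]}. If g ∈ G is such that S · g contains no nonempty zero-sum subsequence of length at most 2n-2-k, then g = e1 + e2. -/
theorem stmt7 {n : ℕ} (hn : 3 ≤ n) (e1 e2 : ZMod n × ZMod n)
    (hB : IsBasis e1 e2) (k : ℕ) (hk2 : 2 ≤ k) (hkn : k ≤ n - 2)
    (g : ZMod n × ZMod n)
    (hzs : ∀ T ≤ g ::ₘ (Multiset.replicate (n - 1) e1 +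
              Multiset.replicate (n - 1) e2 + Multiset.replicate k (e1 + e2)),
      T ≠ 0 → Multiset.card T ≤ 2 * n - 2 - k → T.sum ≠ 0) :
    g = e1 + e2 := by
  haveI : NeZero n := ⟨by omega⟩
  obtain ⟨⟨a, b⟩, hab⟩ := hB.2 g
  simp only at hab
  set α := (-a).val with hα
  set β := (-b).val with hβ
  have hαn : α < n := ZMod.val_lt _
  have hβn : β < n := ZMod.val_lt _
  set z := min k (min α β) with hz
  set x := α - z with hxdef
  set y := β - z with hydef
  have hxz : x + z = α := by omega
  have hyz : y + z = β := by omega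
  set T : Multiset (ZMod n × ZMod n) :=
    g ::ₘ (Multiset.replicate x e1 + Multiset.replicate y e2 +
      Multiset.replicate z (e1 + e2)) with hT
  have hle : T ≤ g ::ₘ (Multiset.replicate (n - 1) e1 +
      Multiset.replicate (n - 1) e2 + Multiset.replicate k (e1 + e2)) := by
    refine Multiset.cons_le_cons g ?_
    refine add_le_add (add_le_add ?_ ?_) ?_ <;>
      exact (Multiset.replicate_le_replicate _).2 (by omega)
  have ha' : a = -((x : ZMod n) + (z : ZMod n)) := by
    have : ((x + z : ℕ) : ZMod n) = -a := by
      rw [hxz, hα, ZMod.natCast_val, ZMod.cast_id]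
    push_cast at this
    linear_combination this
  have hb' : b = -((y : ZMod n) + (z : ZMod n)) := by
    have : ((y + z : ℕ) : ZMod n) = -b := by
      rw [hyz, hβ, ZMod.natCast_val, ZMod.cast_id]
    push_cast at this
    linear_combination this
  have hsum : T.sum = 0 := by
    rw [hT]
    simp only [Multiset.sum_cons, Multiset.sum_add, Multiset.sum_replicate]
    rw [← hab, ha', hb',
      ← Nat.cast_smul_eq_nsmul (ZMod n) x, ← Nat.cast_smul_eq_nsmul (ZMod n) y,
      ← Nat.cast_smul_eq_nsmul (ZMod n) z]
    module
  have hcard : ¬ (Multiset.card T ≤ 2 * n - 2 - k) := fun h =>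
    hzs T hle (by simp [hT]) h hsum
  rw [hT] at hcard
  simp only [Multiset.card_cons, Multiset.card_add, Multiset.card_replicate] at hcard
  have hab' : α = n - 1 ∧ β = n - 1 := by omega
  have hu : (-a) = ((n - 1 : ℕ) : ZMod n) := by
    rw [← hab'.1, hα, ZMod.natCast_val, ZMod.cast_id]
  have hv : (-b) = ((n - 1 : ℕ) : ZMod n) := by
    rw [← hab'.2, hβ, ZMod.natCast_val, ZMod.cast_id]
  have hcast : ((n - 1 : ℕ) : ZMod n) = -1 := by
    have : ((n : ℕ) : ZMod n) = 0 := ZMod.natCast_self n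
    push_cast [Nat.cast_sub (by omega : 1 ≤ n)]
    rw [this]; ring
  have ha1 : a = 1 := by rw [hcast] at hu; linear_combination -hu
  have hb1 : b = 1 := by rw [hcast] at hv; linear_combination -hv
  rw [← hab, ha1, hb1, one_smul, one_smul]
end

section
/- Let n ≥ 3, let G = (Z/nZ) × (Z/nZ) with basis (e1, e2), let x1, ..., xn ∈ [0, n-1] with x1 + ... + xn ≡ 1 (mod n), and let S = e1^{[n-1]} · ∏(x_i e1 + e2) be the corresponding minimal zero-sum sequence of length 2n-1. If g ∈ G is such that S · g has no nonempty zero-sum subsequence of length at most 2n-3, then there is a basis (f1, f2) of G such that S = f1^{[n-1]} · f2^{[n-1]} · (f1+f2) and g = f1 + f2. -/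
theorem stmt8 {n : ℕ} (hn : 3 ≤ n) (e1 e2 : ZMod n × ZMod n)
    (hB : IsBasis e1 e2) (x : Fin n → ZMod n) (hx : (∑ i, x i) = 1)
    (S : Multiset (ZMod n × ZMod n))
    (hSdef : S = Multiset.replicate (n - 1) e1 +
        (Finset.univ : Finset (Fin n)).val.map (fun i => x i • e1 + e2))
    (g : ZMod n × ZMod n)
    (hzs : ∀ T ≤ g ::ₘ S, T ≠ 0 → Multiset.card T ≤ 2 * n - 3 → T.sum ≠ 0) :
    ∃ f1 f2 : ZMod n × ZMod n, IsBasis f1 f2 ∧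
      S = Multiset.replicate (n - 1) f1 + Multiset.replicate (n - 1) f2 +
            {f1 + f2} ∧ g = f1 + f2 := by
  haveI : NeZero n := ⟨by omega⟩
  haveI : Fact (1 < n) := ⟨by omega⟩
  obtain ⟨⟨a, b⟩, hg⟩ := hB.2 g
  simp only at hg
  -- key constraint lemma: no zero-sum subsequence containing g of the given shape
  have key : ∀ (k : ℕ) (I : Finset (Fin n)), k ≤ n - 1 → k + I.card ≤ 2 * n - 4 →
      ¬ (a + (k : ZMod n) + ∑ i ∈ I, x i = 0 ∧ b + (I.card : ZMod n) = 0) := by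
    intro k I hk hkI ⟨h1, h2⟩
    set T : Multiset (ZMod n × ZMod n) :=
      g ::ₘ (Multiset.replicate k e1 + I.val.map (fun i => x i • e1 + e2)) with hT
    have hle : T ≤ g ::ₘ S := by
      rw [hSdef]
      exact Multiset.cons_le_cons g (add_le_add
        ((Multiset.replicate_le_replicate e1).2 hk)
        (Multiset.map_le_map (Finset.val_le_iff.2 (Finset.subset_univ I))))
    have hcard : Multiset.card T ≤ 2 * n - 3 := by
      simp only [hT, Multiset.card_cons, Multiset.card_add, Multiset.card_replicate,
        Multiset.card_map]
      have : Multiset.card I.val = I.card := rfl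
      omega
    have hsum : T.sum = 0 := by
      have hmap : (I.val.map (fun i => x i • e1 + e2)).sum
          = (∑ i ∈ I, x i) • e1 + (I.card : ZMod n) • e2 := by
        rw [show (I.val.map (fun i => x i • e1 + e2)).sum = ∑ i ∈ I, (x i • e1 + e2) from rfl]
        rw [Finset.sum_add_distrib, ← Finset.sum_smul, Finset.sum_const]
        rw [← Nat.cast_smul_eq_nsmul (ZMod n)]
      rw [hT, Multiset.sum_cons, Multiset.sum_add, Multiset.sum_replicate, hmap, ← hg,
        ← Nat.cast_smul_eq_nsmul (ZMod n)]
      have : a • e1 + b • e2 + ((k : ZMod n) • e1 + ((∑ i ∈ I, x i) • e1 + (I.card : ZMod n) • e2))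
          = (a + (k : ZMod n) + ∑ i ∈ I, x i) • e1 + (b + (I.card : ZMod n)) • e2 := by
        module
      rw [this, h1, h2]
      simp
    exact hzs T hle (Multiset.cons_ne_zero) hcard hsum
  -- locate the value of b via m := (-b).val
  set m := (-b).val with hm
  have hmlt : m < n := ZMod.val_lt _
  have hbm : ((m : ℕ) : ZMod n) = -b := by rw [hm, ZMod.natCast_val, ZMod.cast_id]
  have hm_ge : n - 2 ≤ m := by
    by_contra hcon
    obtain ⟨I, hIsub, hIcard⟩ := Finset.exists_subset_card_eq
      (s := (Finset.univ : Finset (Fin n))) (n := m)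
      (by rw [Finset.card_univ, Fintype.card_fin]; omega)
    set k := (-(a + ∑ i ∈ I, x i)).val with hk
    have hklt : k < n := ZMod.val_lt _
    refine key k I (by omega) (by omega) ⟨?_, ?_⟩
    · rw [hk, ZMod.natCast_val, ZMod.cast_id]; ring
    · rw [hIcard, hbm]; ring
  rcases (by omega : m = n - 2 ∨ m = n - 1) with hmeq | hmeq
  · -- impossible case m = n - 2
    exfalso
    rw [hmeq] at hbm
    have pair : ∀ i j : Fin n, i ≠ j → x i + x j = a := by
      intro i j hij
      by_contra hne
      have hjmem : j ∈ Finset.univ.erase i := by simp [hij.symm]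
      set I := (Finset.univ.erase i).erase j with hI
      have hIcard : I.card = n - 2 := by
        rw [hI, Finset.card_erase_of_mem hjmem, Finset.card_erase_of_mem (Finset.mem_univ i),
          Finset.card_univ, Fintype.card_fin]
        omega
      have hIsum : ∑ l ∈ I, x l = 1 - x i - x j := by
        rw [hI, Finset.sum_erase_eq_sub hjmem, Finset.sum_erase_eq_sub (Finset.mem_univ i), hx]
      set k := (x i + x j - 1 - a).val with hk
      have hklt : k < n := ZMod.val_lt _
      have hkcast : (k : ZMod n) = x i + x j - 1 - a := by
        rw [hk, ZMod.natCast_val, ZMod.cast_id]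
      have hkne : k ≠ n - 1 := by
        intro hkeq
        apply hne
        have h1 : ((n - 1 : ℕ) : ZMod n) = -1 := by
          rw [Nat.cast_sub (by omega), ZMod.natCast_self]; ring
        rw [hkeq, h1] at hkcast
        linear_combination -hkcast
      refine key k I (by omega) (by omega) ⟨?_, ?_⟩
      · rw [hkcast, hIsum]; ring
      · rw [hIcard, hbm]; ring
    have hconst : ∀ i j : Fin n, x i = x j := by
      intro i j
      rcases eq_or_ne i j with rfl | hij
      · rfl
      obtain ⟨l, hl, hlj⟩ := Finset.exists_mem_ne
        (s := Finset.univ.erase i)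
        (by rw [Finset.card_erase_of_mem (Finset.mem_univ i), Finset.card_univ,
          Fintype.card_fin]; omega) j
      have hli : l ≠ i := (Finset.mem_erase.1 hl).1
      have h1 := pair i l (fun h => hli h.symm)
      have h2 := pair j l (fun h => hlj h.symm)
      linear_combination h1 - h2
    have h0 : (1 : ZMod n) = 0 := by
      have i0 : Fin n := ⟨0, by omega⟩
      calc (1 : ZMod n) = ∑ i, x i := hx.symm
        _ = ∑ _i : Fin n, x i0 := Finset.sum_congr rfl (fun i _ => hconst i i0)
        _ = n • x i0 := by rw [Finset.sum_const, Finset.card_univ, Fintype.card_fin]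
        _ = 0 := by rw [nsmul_eq_mul, ZMod.natCast_self, zero_mul]
    exact one_ne_zero h0
  -- main case m = n - 1
  rw [hmeq] at hbm
  have hn1 : ((n - 1 : ℕ) : ZMod n) = -1 := by
    rw [Nat.cast_sub (by omega), ZMod.natCast_self]; ring
  have hb1 : b = 1 := by rw [hn1] at hbm; linear_combination hbm
  have hxi : ∀ i : Fin n, x i = a - 1 ∨ x i = a := by
    intro i
    by_contra hcon
    push_neg at hcon
    obtain ⟨h1, h2⟩ := hcon
    set I := Finset.univ.erase i with hI
    have hIcard : I.card = n - 1 := by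
      rw [hI, Finset.card_erase_of_mem (Finset.mem_univ i), Finset.card_univ, Fintype.card_fin]
    have hIsum : ∑ l ∈ I, x l = 1 - x i := by
      rw [hI, Finset.sum_erase_eq_sub (Finset.mem_univ i), hx]
    set k := (x i - 1 - a).val with hk
    have hklt : k < n := ZMod.val_lt _
    have hkcast : (k : ZMod n) = x i - 1 - a := by
      rw [hk, ZMod.natCast_val, ZMod.cast_id]
    have hkne1 : k ≠ n - 1 := by
      intro hkeq
      apply h2
      rw [hkeq, hn1] at hkcast
      linear_combination -hkcast
    have hkne2 : k ≠ n - 2 := by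
      intro hkeq
      apply h1
      have hn2 : ((n - 2 : ℕ) : ZMod n) = -2 := by
        rw [Nat.cast_sub (by omega), ZMod.natCast_self]; push_cast; ring
      rw [hkeq, hn2] at hkcast
      linear_combination -hkcast
    refine key k I (by omega) (by omega) ⟨?_, ?_⟩
    · rw [hkcast, hIsum]; ring
    · rw [hIcard, hbm]; ring
  -- count of indices with x i = a
  set P := Finset.univ.filter (fun i => x i = a) with hP
  have hsum : ((P.card : ℕ) : ZMod n) = 1 := by
    have hsplit : ∑ i, x i = ∑ i ∈ P, x i + ∑ i ∈ Pᶜ, x i :=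
      (Finset.sum_add_sum_compl P x).symm
    have h1 : ∑ i ∈ P, x i = (P.card : ZMod n) * a := by
      rw [Finset.sum_congr rfl (fun i hi => (Finset.mem_filter.1 hi).2), Finset.sum_const,
        nsmul_eq_mul]
    have h2 : ∑ i ∈ Pᶜ, x i = (Pᶜ.card : ZMod n) * (a - 1) := by
      rw [Finset.sum_congr rfl (fun i hi => ?_), Finset.sum_const, nsmul_eq_mul]
      have := Finset.mem_compl.1 hi
      simp only [hP, Finset.mem_filter, Finset.mem_univ, true_and] at this
      exact (hxi i).resolve_right this
    have hlen : P.card ≤ n := by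
      have := P.card_le_univ; rwa [Fintype.card_fin] at this
    have hcc : ((Pᶜ.card : ℕ) : ZMod n) = -(P.card : ZMod n) := by
      rw [Finset.card_compl, Fintype.card_fin, Nat.cast_sub hlen, ZMod.natCast_self]
      ring
    rw [hsplit, h1, h2, hcc] at hx
    linear_combination hx
  have hcard : P.card = 1 := by
    have hle : P.card ≤ n := by
      have := P.card_le_univ; rwa [Fintype.card_fin] at this
    rcases Nat.lt_or_ge P.card n with h | h
    · have := ZMod.val_cast_of_lt h
      rw [hsum, ZMod.val_one] at this
      omega
    · exfalso
      have : P.card = n := by omega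
      rw [this, ZMod.natCast_self] at hsum
      exact one_ne_zero hsum.symm
  obtain ⟨i0, hi0⟩ := Finset.card_eq_one.1 hcard
  have hxi0 : x i0 = a := by
    have : i0 ∈ P := hi0 ▸ Finset.mem_singleton_self i0
    exact (Finset.mem_filter.1 this).2
  have hrest : ∀ i, i ≠ i0 → x i = a - 1 := by
    intro i hi
    have : i ∉ P := by rw [hi0]; simpa using hi
    simp only [hP, Finset.mem_filter, Finset.mem_univ, true_and] at this
    exact (hxi i).resolve_right this
  rw [hb1] at hg
  -- construct the new basis
  refine ⟨e1, (a - 1) • e1 + e2, ?_, ?_, ?_⟩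
  · have hcomp : (fun p : ZMod n × ZMod n => p.1 • e1 + p.2 • ((a - 1) • e1 + e2))
        = (fun p : ZMod n × ZMod n => p.1 • e1 + p.2 • e2)
          ∘ (fun p : ZMod n × ZMod n => (p.1 + p.2 * (a - 1), p.2)) := by
      funext p
      simp only [Function.comp]
      module
    have hψ : Function.Bijective
        (fun p : ZMod n × ZMod n => (p.1 + p.2 * (a - 1), p.2)) := by
      rw [Function.bijective_iff_has_inverse]
      exact ⟨fun q => (q.1 - q.2 * (a - 1), q.2), fun p => by simp, fun q => by simp⟩
    rw [IsBasis, hcomp]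
    exact hB.comp hψ
  · have hval : (Finset.univ : Finset (Fin n)).val
        = i0 ::ₘ (Finset.univ.erase i0).val := by
      rw [Finset.erase_val]
      exact (Multiset.cons_erase (Finset.mem_univ i0)).symm
    have hmaperase : (Finset.univ.erase i0).val.map (fun i => x i • e1 + e2)
        = Multiset.replicate (n - 1) ((a - 1) • e1 + e2) := by
      apply Multiset.eq_replicate.2
      constructor
      · rw [Multiset.card_map]
        have : Multiset.card (Finset.univ.erase i0).val = (Finset.univ.erase i0).card := rfl
        rw [this, Finset.card_erase_of_mem (Finset.mem_univ i0), Finset.card_univ,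
          Fintype.card_fin]
      · intro p hp
        obtain ⟨i, hi, hpi⟩ := Multiset.mem_map.1 hp
        have hne : i ≠ i0 := (Finset.mem_erase.1 (Finset.mem_def.2 hi)).1
        rw [← hpi, hrest i hne]
    rw [hSdef, hval, Multiset.map_cons, hmaperase, hxi0]
    have heq : (e1 + ((a - 1) • e1 + e2)) = a • e1 + e2 := by module
    rw [add_assoc, heq]
    congr 1
    rw [← Multiset.singleton_add, add_comm]
  · rw [← hg]
    module
end

section
/- Let n ≥ 3, let G = (Z/nZ) × (Z/nZ) with basis (e1, e2), let k ∈ [1, n-2], and suppose S · g (for some g ∈ G) equals e1^{[n-1]} · e2^{[n-1]} · (e1+e2)^{[k+1]} with g ∈ supp(S · g) and the subsequence S satisfying 0 ∉ Σ_{≤ 2n-1-k}(S). Then g = e1 + e2; that is, S = e1^{[n-1]} · e2^{[n-1]} · (e1+e2)^{[k]}. -/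
lemma nsmul_self_zero {n : ℕ} (x : ZMod n × ZMod n) : n • x = 0 := by
  rw [← Nat.cast_smul_eq_nsmul (ZMod n), ZMod.natCast_self, zero_smul]

lemma auxContra {n : ℕ} (hn : 3 ≤ n) (k : ℕ) (hk1 : 1 ≤ k) (hk2 : k ≤ n - 2)
    (e1 e2 : ZMod n × ZMod n) (S : Multiset (ZMod n × ZMod n))
    (hform : e1 ::ₘ S = Multiset.replicate (n - 1) e1 +
        Multiset.replicate (n - 1) e2 + Multiset.replicate (k + 1) (e1 + e2))
    (hzs : ∀ T ≤ S, T ≠ 0 → Multiset.card T ≤ 2 * n - 1 - k → T.sum ≠ 0) :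
    False := by
  set T : Multiset (ZMod n × ZMod n) := Multiset.replicate (n - 1 - k) e1 +
      Multiset.replicate (n - 1 - k) e2 + Multiset.replicate (k + 1) (e1 + e2) with hT
  have hle : T ≤ S := by
    rw [Multiset.le_iff_count]
    intro a
    rw [hT]
    have hS : Multiset.count a S + (if a = e1 then 1 else 0) =
        Multiset.count a (Multiset.replicate (n - 1) e1 +
          Multiset.replicate (n - 1) e2 + Multiset.replicate (k + 1) (e1 + e2)) := by
      rw [← hform]
      simp [Multiset.count_cons, add_comm]
    simp only [Multiset.count_add, Multiset.count_replicate] at hS ⊢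
    split_ifs at hS ⊢ <;> first | omega | simp_all
  have hne : T ≠ 0 := by
    rw [← Multiset.card_pos]
    simp [hT]
  have hcard : Multiset.card T ≤ 2 * n - 1 - k := by
    simp [hT]; omega
  have hsum : T.sum = 0 := by
    rw [hT]
    simp only [Multiset.sum_add, Multiset.sum_replicate]
    rw [smul_add, add_add_add_comm, ← add_nsmul, ← add_nsmul]
    have : n - 1 - k + (k + 1) = n := by omega
    rw [this, nsmul_self_zero, nsmul_self_zero, add_zero]
  exact hzs T hle hne hcard hsum

theorem stmt9 {n : ℕ} (hn : 3 ≤ n) (e1 e2 : ZMod n × ZMod n)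
    (hB : IsBasis e1 e2) (k : ℕ) (hk1 : 1 ≤ k) (hk2 : k ≤ n - 2)
    (S : Multiset (ZMod n × ZMod n)) (g : ZMod n × ZMod n)
    (hform : g ::ₘ S = Multiset.replicate (n - 1) e1 +
        Multiset.replicate (n - 1) e2 + Multiset.replicate (k + 1) (e1 + e2))
    (hzs : ∀ T ≤ S, T ≠ 0 → Multiset.card T ≤ 2 * n - 1 - k → T.sum ≠ 0) :
    g = e1 + e2 ∧
      S = Multiset.replicate (n - 1) e1 + Multiset.replicate (n - 1) e2 +
            Multiset.replicate k (e1 + e2) := by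
  have hmem : g ∈ g ::ₘ S := Multiset.mem_cons_self g S
  rw [hform] at hmem
  have hn1 : n - 1 ≠ 0 := by omega
  simp only [Multiset.mem_add, Multiset.mem_replicate, hn1, ne_eq, false_or,
    Nat.succ_ne_zero, not_false_iff, true_and, Nat.add_one_ne_zero] at hmem
  have hg : g = e1 + e2 := by
    rcases hmem with (hg1 | hg2) | hg3
    · exact absurd (auxContra hn k hk1 hk2 e1 e2 S (hg1 ▸ hform) hzs) id
    · refine absurd (auxContra hn k hk1 hk2 e2 e1 S ?_ hzs) id
      have h' := hform
      rw [hg2] at h'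
      rw [h', add_comm e2 e1, add_comm (Multiset.replicate (n - 1) e2)]
    · exact hg3
  refine ⟨hg, ?_⟩
  have key : (e1 + e2) ::ₘ (Multiset.replicate (n - 1) e1 + Multiset.replicate (n - 1) e2 +
      Multiset.replicate k (e1 + e2)) = (e1 + e2) ::ₘ S := by
    rw [← Multiset.add_cons, ← Multiset.replicate_succ, ← hform, hg]
  exact ((Multiset.cons_inj_right (e1 + e2)).mp key).symm
end

section
/- Let p ∈ {2, 3, 5, 7} and let n = 2^{s1}·3^{s2}·5^{s3}·7^{s4} ≥ 2. Assume: (i) the Conjecture holds for all k ∈ [0, q-1] in (Z/qZ)² for each prime q ≤ 7 (known), and (ii) the multiplicative theorem: if the Conjecture holds for k_n in (Z/nZ)² and for k_m (or k_m+1 under side conditions) in (Z/mZ)², then it holds for k = k_m·n + k_n in (Z/mnZ)². Then the Conjecture holds for all k ∈ [0, n-1] in (Z/nZ)². -/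
/-- The structure in part 2 (k = 1) of the Conjecture:
`S = e1^{[N-1]} · ∏ᵢ (xᵢ e1 + e2)` with `∑ xᵢ ≡ 1 (mod N)`. -/
def Form1 (N : ℕ) (e1 e2 : ZMod N × ZMod N) (S : Multiset (ZMod N × ZMod N)) : Prop :=
  ∃ x : Fin N → ZMod N, (∑ i, x i) = 1 ∧
    S = Multiset.replicate (N - 1) e1 +
        (Finset.univ : Finset (Fin N)).val.map (fun i => x i • e1 + e2)

/-- `S` has the structure described by the Conjecture for the parameter `k` in
`(ZMod N)²`. -/
def HasConjStructure (N k : ℕ) (S : Multiset (ZMod N × ZMod N)) : Prop :=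
  ∃ e1 e2 : ZMod N × ZMod N, IsBasis e1 e2 ∧
    (k = 0 → Form1 N e1 e2 (-S.sum ::ₘ S)) ∧
    (k = 1 → Form1 N e1 e2 S) ∧
    (2 ≤ k ∧ k ≤ N - 2 →
      S = Multiset.replicate (N - 1) e1 + Multiset.replicate (N - 1) e2 +
            Multiset.replicate k (e1 + e2)) ∧
    (k = N - 1 → ∃ x : ℕ, 1 ≤ x ∧ x ≤ N - 1 ∧ Nat.gcd x N = 1 ∧
      S = Multiset.replicate (N - 1) e1 + Multiset.replicate (N - 1) e2 +
            Multiset.replicate (N - 1) ((x : ZMod N) • e1 + e2))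

/-- The Conjecture holds for `k` in `(ZMod N)²`: every sequence of length
`2N - 2 + k` with no nonempty zero-sum subsequence of length at most `2N - 1 - k`
has the conjectured structure. -/
def ConjHolds (N k : ℕ) : Prop :=
  ∀ S : Multiset (ZMod N × ZMod N), Multiset.card S = 2 * N - 2 + k →
    (∀ T ≤ S, T ≠ 0 → Multiset.card T ≤ 2 * N - 1 - k → T.sum ≠ 0) →
    HasConjStructure N k S


lemma factor7 (a b c d N : ℕ) (hN : N = 2^a*3^b*5^c*7^d) (h2 : 2 ≤ N) :
    ∃ p m, (p = 2 ∨ p = 3 ∨ p = 5 ∨ p = 7) ∧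
      (∃ a' b' c' d' : ℕ, m = 2^a'*3^b'*5^c'*7^d') ∧ N = p * m := by
  match a, b, c, d with
  | a+1, b, c, d =>
    exact ⟨2, 2^a*3^b*5^c*7^d, Or.inl rfl, ⟨a,b,c,d,rfl⟩, by rw [hN]; ring⟩
  | 0, b+1, c, d =>
    exact ⟨3, 2^0*3^b*5^c*7^d, Or.inr (Or.inl rfl), ⟨0,b,c,d,rfl⟩, by rw [hN]; ring⟩
  | 0, 0, c+1, d =>
    exact ⟨5, 2^0*3^0*5^c*7^d, Or.inr (Or.inr (Or.inl rfl)), ⟨0,0,c,d,rfl⟩, by rw [hN]; ring⟩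
  | 0, 0, 0, d+1 =>
    exact ⟨7, 2^0*3^0*5^0*7^d, Or.inr (Or.inr (Or.inr rfl)), ⟨0,0,0,d,rfl⟩, by rw [hN]; ring⟩
  | 0, 0, 0, 0 => simp at hN; omega

theorem stmt17 (s1 s2 s3 s4 : ℕ) (n : ℕ)
    (hn : n = 2 ^ s1 * 3 ^ s2 * 5 ^ s3 * 7 ^ s4) (hn2 : 2 ≤ n)
    (hPrimes : ∀ q ∈ ({2, 3, 5, 7} : Finset ℕ), ∀ k ≤ q - 1, ConjHolds q k)
    (hMult : ∀ m' n' : ℕ, 2 ≤ m' → 2 ≤ n' → ∀ km kn : ℕ,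
      km ≤ m' - 1 → kn ≤ n' - 1 → ConjHolds n' kn →
      (ConjHolds m' km ∨
        (1 ≤ kn ∧ 1 ≤ km ∧ km ≤ m' - 2 ∧ ConjHolds m' (km + 1))) →
      ConjHolds (m' * n') (km * n' + kn)) :
    ∀ k ≤ n - 1, ConjHolds n k := by
  suffices H : ∀ N, (∃ a b c d : ℕ, N = 2^a*3^b*5^c*7^d) → 2 ≤ N → ∀ k ≤ N - 1, ConjHolds N k by
    exact H n ⟨s1, s2, s3, s4, hn⟩ hn2
  clear hn hn2
  intro N
  induction N using Nat.strong_induction_on with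
  | _ N ih =>
    rintro ⟨a, b, c, d, hN⟩ h2 k hk
    obtain ⟨p, m, hp, hsm, hpm⟩ := factor7 a b c d N hN h2
    have hp2 : 2 ≤ p := by omega
    have hpmem : p ∈ ({2, 3, 5, 7} : Finset ℕ) := by
      rcases hp with rfl | rfl | rfl | rfl <;> decide
    rcases Nat.lt_or_ge m 2 with hm | hm2
    · -- m = 0 or 1; m = 0 impossible since N ≥ 2
      interval_cases m
      · omega
      · have hNp : N = p := by omega
        subst hNp
        exact hPrimes N hpmem k (by omega)
    · have hm0 : 0 < m := by omega
      have hmN : m < N := by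
        have : 2 * m ≤ p * m := Nat.mul_le_mul_right m hp2
        omega
      have hkN : k < p * m := by omega
      have hkm : k / m ≤ p - 1 := by
        have : k / m < p := Nat.div_lt_iff_lt_mul hm0 |>.mpr (by omega)
        omega
      have hkn : k % m ≤ m - 1 := by
        have := Nat.mod_lt k hm0
        omega
      have hConjM : ConjHolds m (k % m) := ih m hmN hsm hm2 (k % m) hkn
      have hConjP : ConjHolds p (k / m) := hPrimes p hpmem (k / m) hkm
      have := hMult p m hp2 hm2 (k / m) (k % m) hkm hkn hConjM (Or.inl hConjP)
      rwa [Nat.div_add_mod', ← hpm] at this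
end

section
/- Let m ≥ 2 and let G = (Z/2mZ) × (Z/2mZ) with basis (e1, e2). Suppose m is even and α = x·e1 + m·e2 for some x ∈ [1, 2m-1] with ord(2(1+x)e1) = m and 2m - 2 ≥ k ≥ 2. Then the sequence S = e1^{[2m-1]} · e2^{[2m-1]} · (e1+e2+α)^{[2k_m+1]}, for k_m = m-1 ≥ 2, contains a nonempty zero-sum subsequence of length at most 2m+1. -/
lemma aux18 (m : ℕ) (hm : 2 ≤ m) (e1 e2 : ZMod (2 * m) × ZMod (2 * m)) (x : ℕ)
    (α : ZMod (2 * m) × ZMod (2 * m)) (hα : α = x • e1 + m • e2)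
    (u t : ℕ) (hu1 : 1 ≤ u) (hu2 : u ≤ m - 1) (huo : Odd u)
    (ht1 : m - 1 ≤ t) (ht2 : t ≤ 2 * m - 1)
    (hut : ((u * (1 + x) : ℕ) : ZMod (2 * m)) = ((t : ℕ) : ZMod (2 * m))) :
    ∃ T ≤ Multiset.replicate (2 * m - 1) e1 + Multiset.replicate (2 * m - 1) e2 +
            Multiset.replicate (2 * (m - 1) + 1) (e1 + e2 + α),
      T ≠ 0 ∧ Multiset.card T ≤ 2 * m + 1 ∧ T.sum = 0 := by
  obtain ⟨j, hj⟩ := huo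
  refine ⟨Multiset.replicate (2 * m - t) e1 + Multiset.replicate (m - u) e2 +
      Multiset.replicate u (e1 + e2 + α), ?_, ?_, ?_, ?_⟩
  · exact add_le_add (add_le_add ((Multiset.replicate_le_replicate e1).2 (by omega))
      ((Multiset.replicate_le_replicate e2).2 (by omega)))
      ((Multiset.replicate_le_replicate _).2 (by omega))
  · intro h
    have := congrArg Multiset.card h
    simp [Multiset.card_replicate] at this
    omega
  · simp [Multiset.card_replicate]
    omega
  · rw [Multiset.sum_add, Multiset.sum_add, Multiset.sum_replicate, Multiset.sum_replicate,
      Multiset.sum_replicate, hα]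
    rw [← Nat.cast_smul_eq_nsmul (ZMod (2 * m)) (2 * m - t), ← Nat.cast_smul_eq_nsmul (ZMod (2 * m)) (m - u),
      ← Nat.cast_smul_eq_nsmul (ZMod (2 * m)) u, ← Nat.cast_smul_eq_nsmul (ZMod (2 * m)) x,
      ← Nat.cast_smul_eq_nsmul (ZMod (2 * m)) m]
    have h2m : ((2 * m : ℕ) : ZMod (2 * m)) = 0 := ZMod.natCast_self _
    have hsub1 : ((2 * m - t : ℕ) : ZMod (2 * m)) = - (t : ZMod (2 * m)) := by
      rw [Nat.cast_sub (by omega)]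
      push_cast [h2m]
      ring
    have hsub2 : ((m - u : ℕ) : ZMod (2 * m)) = ((m : ℕ) : ZMod (2 * m)) - ((u : ℕ) : ZMod (2 * m)) := by
      rw [Nat.cast_sub (by omega)]
    have hmu : ((m : ℕ) : ZMod (2 * m)) * (1 + ((u : ℕ) : ZMod (2 * m))) = 0 := by
      have hnat : m * (1 + u) = 2 * m * (j + 1) := by subst hj; ring
      calc ((m : ℕ) : ZMod (2 * m)) * (1 + ((u : ℕ) : ZMod (2 * m)))
          = ((m * (1 + u) : ℕ) : ZMod (2 * m)) := by push_cast; ring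
        _ = ((2 * m * (j + 1) : ℕ) : ZMod (2 * m)) := by rw [hnat]
        _ = 0 := by rw [Nat.cast_mul, ZMod.natCast_self, zero_mul]
    have hut' : ((u : ℕ) : ZMod (2 * m)) * (1 + ((x : ℕ) : ZMod (2 * m))) = ((t : ℕ) : ZMod (2 * m)) := by
      push_cast at hut ⊢; linear_combination hut
    rw [hsub1, hsub2]
    match_scalars
    · push_cast at hut' ⊢
      linear_combination hut'
    · push_cast at hmu ⊢
      linear_combination hmu

theorem stmt18 (m : ℕ) (hm : 2 ≤ m) (hme : Even m) (hkm : 2 ≤ m - 1)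
    (e1 e2 : ZMod (2 * m) × ZMod (2 * m)) (hB : IsBasis e1 e2)
    (x : ℕ) (hx1 : 1 ≤ x) (hx2 : x ≤ 2 * m - 1)
    (α : ZMod (2 * m) × ZMod (2 * m)) (hα : α = x • e1 + m • e2)
    (hord : addOrderOf ((2 * (1 + x)) • e1) = m) :
    ∃ T ≤ Multiset.replicate (2 * m - 1) e1 + Multiset.replicate (2 * m - 1) e2 +
            Multiset.replicate (2 * (m - 1) + 1) (e1 + e2 + α),
      T ≠ 0 ∧ Multiset.card T ≤ 2 * m + 1 ∧ T.sum = 0 := by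
  have hm0 : 0 < m := by omega
  have hkill : ∀ k : ℕ, 2 * m ∣ k → k • e1 = 0 := by
    intro k hk
    rw [← Nat.cast_smul_eq_nsmul (ZMod (2 * m)) k,
      (ZMod.natCast_eq_zero_iff k (2 * m)).2 hk, zero_smul]
  -- coprimality of 1+x and m from the order hypothesis
  have hco : Nat.Coprime (1 + x) m := by
    set g := Nat.gcd (1 + x) m with hg
    obtain ⟨a, ha⟩ : g ∣ 1 + x := Nat.gcd_dvd_left _ _
    obtain ⟨b, hb⟩ : g ∣ m := Nat.gcd_dvd_right _ _
    have hg0 : 0 < g := Nat.gcd_pos_of_pos_right _ hm0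
    have hb0 : 0 < b := by nlinarith
    have hz : b • ((2 * (1 + x)) • e1) = 0 := by
      rw [← mul_nsmul']
      apply hkill
      exact ⟨a, by rw [ha, hb]; ring⟩
    have hdvd : m ∣ b := hord ▸ addOrderOf_dvd_iff_nsmul_eq_zero.2 hz
    have hbm : b = m := Nat.dvd_antisymm ⟨g, by rw [hb]; ring⟩ hdvd
    have : g = 1 := by nlinarith
    exact this
  have hxodd : Odd (1 + x) := by
    rcases Nat.even_or_odd (1 + x) with he | ho
    · exfalso
      have h2 : (2 : ℕ) ∣ Nat.gcd (1 + x) m := Nat.dvd_gcd he.two_dvd hme.two_dvd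
      rw [hco] at h2; omega
    · exact ho
  have hco2 : Nat.Coprime (1 + x) (2 * m) := by
    have h2 : Nat.Coprime (1 + x) 2 := by
      refine (Nat.Prime.coprime_iff_not_dvd Nat.prime_two).2 ?_ |>.symm
      have := Nat.odd_iff.1 hxodd
      omega
    exact Nat.Coprime.mul_right h2 hco
  haveI hNe : NeZero (2 * m) := ⟨by omega⟩
  set z : ℕ := (((1 + x : ℕ) : ZMod (2 * m))⁻¹).val with hzdef
  have hzinv : ((1 + x : ℕ) : ZMod (2 * m)) * ((z : ℕ) : ZMod (2 * m)) = 1 := by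
    rw [hzdef, ZMod.natCast_zmod_val]
    exact ZMod.coe_mul_inv_eq_one _ hco2
  have hmod1 : ((1 + x) * z) % (2 * m) = 1 := by
    have h : (((1 + x) * z : ℕ) : ZMod (2 * m)) = ((1 : ℕ) : ZMod (2 * m)) := by
      push_cast
      push_cast at hzinv
      linear_combination hzinv
    have h2 : (1 + x) * z % (2 * m) = 1 % (2 * m) := (ZMod.natCast_eq_natCast_iff _ _ _).1 h
    rwa [Nat.one_mod_eq_one.mpr (by omega)] at h2
  have hzodd : Odd z := by
    obtain ⟨q, hq⟩ : ∃ q, 2 * m * q + 1 = (1 + x) * z := by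
      refine ⟨(1 + x) * z / (2 * m), ?_⟩
      conv_rhs => rw [← Nat.div_add_mod ((1 + x) * z) (2 * m)]
      rw [hmod1]
    have hoddprod : Odd ((1 + x) * z) := ⟨m * q, by rw [← hq]; ring⟩
    exact (Nat.odd_mul.1 hoddprod).2
  set u₁ : ℕ := ((m - 1) * z) % (2 * m) with hu1def
  have hu₁lt : u₁ < 2 * m := Nat.mod_lt _ (by omega)
  have hu₁odd : Odd u₁ := by
    have h1 : u₁ % 2 = ((m - 1) * z) % 2 := by
      rw [hu1def]
      exact Nat.mod_mod_of_dvd _ ⟨m, rfl⟩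
    have h2 : Odd ((m - 1) * z) := by
      refine Nat.odd_mul.2 ⟨?_, hzodd⟩
      rcases hme with ⟨c, hc⟩
      exact ⟨c - 1, by omega⟩
    rw [Nat.odd_iff] at h2 ⊢
    omega
  have hcastu₁ : ((u₁ : ℕ) : ZMod (2 * m)) = (((m - 1) * z : ℕ) : ZMod (2 * m)) := by
    rw [hu1def]; exact ZMod.natCast_mod _ _
  have hu1x : ((u₁ : ℕ) : ZMod (2 * m)) * ((1 + x : ℕ) : ZMod (2 * m)) = ((m - 1 : ℕ) : ZMod (2 * m)) := by
    rw [hcastu₁, Nat.cast_mul]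
    calc ((m - 1 : ℕ) : ZMod (2 * m)) * (z : ℕ) * ((1 + x : ℕ) : ZMod (2 * m))
        = ((m - 1 : ℕ) : ZMod (2 * m)) * (((1 + x : ℕ) : ZMod (2 * m)) * (z : ℕ)) := by ring
      _ = ((m - 1 : ℕ) : ZMod (2 * m)) := by rw [hzinv, mul_one]
  by_cases hcase : u₁ ≤ m - 1
  · refine aux18 m hm e1 e2 x α hα u₁ (m - 1) ?_ hcase hu₁odd le_rfl (by omega) ?_
    · rcases hu₁odd with ⟨c, hc⟩; omega
    · push_cast
      push_cast at hu1x
      linear_combination hu1x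
  · -- u₁ ≥ m + 1 since u₁ odd and m even
    have hu₁ge : m + 1 ≤ u₁ := by
      rcases hme with ⟨c, hc⟩
      rw [Nat.odd_iff] at hu₁odd
      omega
    have hm1x : ((m : ℕ) : ZMod (2 * m)) * ((1 + x : ℕ) : ZMod (2 * m)) = ((m : ℕ) : ZMod (2 * m)) := by
      rcases hxodd with ⟨i, hi⟩
      have hnat : m * (1 + x) = 2 * m * i + m := by rw [hi]; ring
      calc ((m : ℕ) : ZMod (2 * m)) * ((1 + x : ℕ) : ZMod (2 * m))
          = ((m * (1 + x) : ℕ) : ZMod (2 * m)) := by push_cast; ring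
        _ = ((2 * m * i + m : ℕ) : ZMod (2 * m)) := by rw [hnat]
        _ = ((m : ℕ) : ZMod (2 * m)) := by
            rw [Nat.cast_add, Nat.cast_mul, ZMod.natCast_self, zero_mul, zero_add]
    have huodd : Odd (u₁ - m) := by
      rcases hme with ⟨c, hc⟩
      have h1 := Nat.odd_iff.1 hu₁odd
      exact Nat.odd_iff.2 (by omega)
    refine aux18 m hm e1 e2 x α hα (u₁ - m) (2 * m - 1) (by omega) (by omega) huodd (by omega) le_rfl ?_
    · have hs1 : ((u₁ - m : ℕ) : ZMod (2 * m)) = ((u₁ : ℕ) : ZMod (2 * m)) - ((m : ℕ) : ZMod (2 * m)) :=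
        Nat.cast_sub (by omega)
      have hs2 : ((m - 1 : ℕ) : ZMod (2 * m)) = ((m : ℕ) : ZMod (2 * m)) - 1 := by
        rw [Nat.cast_sub (by omega)]; norm_num
      have hs3 : ((2 * m - 1 : ℕ) : ZMod (2 * m)) = -1 := by
        rw [Nat.cast_sub (by omega), ZMod.natCast_self]
        norm_num
      rw [Nat.cast_mul, hs1, hs3]
      rw [hs2] at hu1x
      push_cast at hu1x hm1x ⊢
      linear_combination hu1x - hm1x
end
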